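/- Let Ω > 0 and θ₀ > 0, and define θ(ζ) = (1/Ω)·( 1 + (θ₀Ω − 1)·shc(√(Ω/2)·ζ) ) for ζ > 0. Then θ satisfies θ″(ζ) + (2/ζ)·θ′(ζ) + (1 − Ω·θ(ζ))/2 = 0 for all ζ > 0, and θ(ζ) → θ₀ and θ′(ζ) → 0 as ζ → 0⁺; that is, θ solves the generalized Lane–Emden equation with γ = 2 and initial data θ(0) = θ₀, θ′(0) = 0. -/

import Mathlib

open Filter

/-- The cardinal hyperbolic sine: shc x = sinh x / x for x ≠ 0, and shc 0 = 1. -/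
noncomputable def shc (x : ℝ) : ℝ := if x = 0 then 1 else Real.sinh x / x

/-!
Away from `0`, differentiating `shc x = sinh x / x` twice gives
`shc'' + (2 / x) shc' = shc`: `shc` is an eigenfunction of the radial Laplacian of `ℝ³`.
Rescaling by `k = √(Ω / 2)` and shifting by the constant `1 / Ω` turns this into the
Lane–Emden equation with `γ = 2`. The initial data come from `shc = dslope sinh 0`, which is
continuous with value `1` at `0`, and from L'Hôpital's rule for
`shc' x = (x cosh x - sinh x) / x ^ 2`, whose quotient of derivatives is `sinh x / 2`.
-/

open Topology Real

lemma shc_of_ne_zero {x : ℝ} (hx : x ≠ 0) : shc x = sinh x / x := if_neg hx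

lemma shc_zero : shc 0 = 1 := if_pos rfl

lemma shc_eq_dslope : shc = dslope sinh 0 := by
  ext x
  rcases eq_or_ne x 0 with rfl | hx
  · simp [shc, (hasDerivAt_sinh 0).deriv]
  · rw [shc_of_ne_zero hx, dslope_of_ne _ hx, slope_def_field, sinh_zero, sub_zero, sub_zero]

@[fun_prop]
lemma continuous_shc : Continuous shc := by
  refine continuous_iff_continuousAt.mpr fun x ↦ ?_
  rw [shc_eq_dslope]
  rcases eq_or_ne x 0 with rfl | hx
  · exact continuousAt_dslope_same.mpr differentiableAt_sinh
  · rw [continuousAt_dslope_of_ne hx]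
    fun_prop

lemma hasDerivAt_shc {x : ℝ} (hx : x ≠ 0) :
    HasDerivAt shc ((x * cosh x - sinh x) / x ^ 2) x := by
  have h : HasDerivAt (fun y ↦ sinh y / y) ((cosh x * x - sinh x * 1) / x ^ 2) x :=
    (hasDerivAt_sinh x).div (hasDerivAt_id x) hx
  refine (h.congr_of_eventuallyEq ?_).congr_deriv (by ring)
  filter_upwards [isOpen_ne.mem_nhds hx] with y hy using shc_of_ne_zero hy

lemma deriv_shc_eventuallyEq {x : ℝ} (hx : x ≠ 0) :
    deriv shc =ᶠ[𝓝 x] fun y ↦ (y * cosh y - sinh y) / y ^ 2 := by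
  filter_upwards [isOpen_ne.mem_nhds hx] with y hy using (hasDerivAt_shc hy).deriv

lemma hasDerivAt_mul_cosh_sub_sinh (x : ℝ) :
    HasDerivAt (fun y ↦ y * cosh y - sinh y) (x * sinh x) x :=
  (((hasDerivAt_id' x).mul (hasDerivAt_cosh x)).sub (hasDerivAt_sinh x)).congr_deriv (by ring)

lemma hasDerivAt_deriv_shc {x : ℝ} (hx : x ≠ 0) :
    HasDerivAt (deriv shc)
      ((x ^ 2 * sinh x - 2 * x * cosh x + 2 * sinh x) / x ^ 3) x := by
  have h := (hasDerivAt_mul_cosh_sub_sinh x).div (hasDerivAt_pow 2 x) (pow_ne_zero 2 hx)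
  refine (h.congr_of_eventuallyEq (deriv_shc_eventuallyEq hx)).congr_deriv ?_
  field_simp
  ring

lemma tendsto_deriv_shc_nhdsNE_zero : Tendsto (deriv shc) (𝓝[≠] 0) (𝓝 0) := by
  have hlim : Tendsto (fun x ↦ (x * cosh x - sinh x) / x ^ 2) (𝓝[≠] 0) (𝓝 0) := by
    have hratio : Tendsto (fun x ↦ x * sinh x / (2 * x)) (𝓝[≠] 0) (𝓝 0) := by
      have : Tendsto (fun x ↦ sinh x / 2) (𝓝[≠] 0) (𝓝 0) :=
        (Continuous.tendsto' (by fun_prop) 0 0 (by simp)).mono_left nhdsWithin_le_nhds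
      refine this.congr' (eventually_nhdsWithin_of_forall fun x (hx : x ≠ 0) ↦ ?_)
      field_simp
    refine HasDerivAt.lhopital_zero_nhdsNE (f' := fun x ↦ x * sinh x) (g' := fun x ↦ 2 * x)
      ?_ ?_ ?_ ?_ ?_ hratio
    · exact eventually_nhdsWithin_of_forall fun x _ ↦ hasDerivAt_mul_cosh_sub_sinh x
    · exact eventually_nhdsWithin_of_forall fun x _ ↦ by
        simpa [mul_comm] using hasDerivAt_pow 2 x
    · exact eventually_nhdsWithin_of_forall fun x (hx : x ≠ 0) ↦ by positivity
    · exact tendsto_nhdsWithin_of_tendsto_nhds <|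
        Continuous.tendsto' (by fun_prop) 0 0 (by simp)
    · exact tendsto_nhdsWithin_of_tendsto_nhds <|
        Continuous.tendsto' (by fun_prop) 0 0 (by simp)
  exact hlim.congr' (eventually_nhdsWithin_of_forall fun x hx ↦ (hasDerivAt_shc hx).deriv.symm)

noncomputable def radialLaplacian (f : ℝ → ℝ) (x : ℝ) : ℝ :=
  deriv (deriv f) x + 2 / x * deriv f x

lemma radialLaplacian_shc {x : ℝ} (hx : x ≠ 0) : radialLaplacian shc x = shc x := by
  rw [radialLaplacian, (hasDerivAt_deriv_shc hx).deriv, (hasDerivAt_shc hx).deriv,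
    shc_of_ne_zero hx]
  field_simp
  ring

lemma deriv_const_mul_comp_mul (f : ℝ → ℝ) (b k : ℝ) :
    deriv (fun x ↦ b * f (k * x)) = fun x ↦ b * k * deriv f (k * x) := by
  ext x
  rw [deriv_const_mul_field, deriv_comp_mul_left, smul_eq_mul, mul_assoc]

lemma radialLaplacian_const_add_mul_comp_mul (f : ℝ → ℝ) (a b k x : ℝ) :
    radialLaplacian (fun x ↦ a + b * f (k * x)) x = k ^ 2 * b * radialLaplacian f (k * x) := by
  simp only [radialLaplacian, deriv_const_add', deriv_const_mul_comp_mul]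
  rcases eq_or_ne k 0 with rfl | hk
  · simp
  rcases eq_or_ne x 0 with rfl | hx
  · simp only [mul_zero, div_zero, zero_mul, add_zero]
    ring
  field_simp

theorem laneEmden_gamma_two_shc_solution
    (Ω θ₀ : ℝ) (hΩ : 0 < Ω) (θ : ℝ → ℝ)
    (hθ : θ = fun ζ : ℝ =>
      (1 / Ω) * (1 + (θ₀ * Ω - 1) * shc (Real.sqrt (Ω / 2) * ζ))) :
    (∀ ζ : ℝ, 0 < ζ →
      deriv (deriv θ) ζ + (2 / ζ) * deriv θ ζ + (1 - Ω * θ ζ) / 2 = 0) ∧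
    Tendsto θ (nhdsWithin 0 (Set.Ioi 0)) (nhds θ₀) ∧
    Tendsto (deriv θ) (nhdsWithin 0 (Set.Ioi 0)) (nhds 0) := by
  set k := √(Ω / 2)
  have hk : 0 < k := Real.sqrt_pos.mpr (by positivity)
  have hk2 : k ^ 2 = Ω / 2 := Real.sq_sqrt (by positivity)
  set b := (θ₀ * Ω - 1) / Ω
  replace hθ : θ = fun ζ ↦ 1 / Ω + b * shc (k * ζ) := by
    rw [hθ]
    funext ζ
    ring
  refine ⟨fun ζ hζ ↦ ?_, ?_, ?_⟩
  · have h := radialLaplacian_const_add_mul_comp_mul shc (1 / Ω) b k ζ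
    rw [radialLaplacian_shc (by positivity), ← hθ, radialLaplacian, hk2] at h
    rw [h, hθ]
    field_simp
    ring
  · have hθ0 : θ 0 = θ₀ := by
      simp only [hθ, mul_zero, shc_zero, b]
      field_simp
      ring
    rw [← hθ0, hθ]
    exact (Continuous.tendsto (by fun_prop) 0).mono_left nhdsWithin_le_nhds
  · have hmap : Tendsto (k * ·) (𝓝[>] 0) (𝓝[≠] 0) :=
      tendsto_nhdsWithin_iff.mpr ⟨Continuous.tendsto' (by fun_prop) 0 0 (by simp)
        |>.mono_left nhdsWithin_le_nhds,
        eventually_nhdsWithin_of_forall fun x (hx : 0 < x) ↦ (mul_pos hk hx).ne'⟩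
    rw [hθ, deriv_const_add', deriv_const_mul_comp_mul]
    simpa using (tendsto_deriv_shc_nhdsNE_zero.comp hmap).const_mul (b * k)
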